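/- arXiv:1605.03637 — 5 statements merged into one kernel-verified Lean document; each statement's English description precedes it below -/
import Mathlib

section
/- With Ξ_{L,ℓ} and the suitable ℓ-cover C_{L,ℓ}(x_0) = {Λ_ℓ(a)}_{a∈Ξ_{L,ℓ}} as above, the box Λ_L(x_0) = Λ^ℝ_L(x_0) ∩ ℤ^d equals the union over a ∈ Ξ_{L,ℓ} of the shrunken boxes Λ_ℓ^{Λ_L, ℓ/10}(a) = {y ∈ Λ_ℓ(a) : dist(y, Λ_L \ Λ_ℓ(a)) > ⌊ℓ/10⌋}. -/
/-- The box of side `L` centered at `x ∈ ℝ^d`, as a set of lattice points in `ℤ^d`. -/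
def latticeBox (d : ℕ) (L : ℝ) (x : Fin d → ℝ) : Set (Fin d → ℤ) :=
  {y | ∀ i, |(y i : ℝ) - x i| ≤ L / 2}

/-- The set of centers of a suitable `ℓ`-cover of the box of side `L` centered at `x₀`. -/
def coverCenters (d : ℕ) (L ℓ ρ : ℝ) (x₀ : Fin d → ℝ) : Set (Fin d → ℝ) :=
  {a | (∃ m : Fin d → ℤ, a = fun i => x₀ i + ρ * ℓ * (m i)) ∧ ∀ i, |a i - x₀ i| ≤ L / 2}

/-- The shrunken box `Λ_ℓ^{Λ_L, ℓ/10}(a)`: points of `Λ_ℓ(a)` at sup-distance greater than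
`⌊ℓ/10⌋` from `Λ_L \ Λ_ℓ(a)`. -/
def shrunkenBox (d : ℕ) (L ℓ : ℝ) (x₀ : Fin d → ℝ) (a : Fin d → ℝ) : Set (Fin d → ℤ) :=
  {y | y ∈ latticeBox d ℓ a ∧ ∀ z : Fin d → ℤ,
    z ∈ latticeBox d L x₀ → z ∉ latticeBox d ℓ a →
      (⌊ℓ / 10⌋ : ℝ) < ((Finset.univ.sup fun i => (y i - z i).natAbs : ℕ) : ℝ)}

lemma key_choice (ℓ r L : ℝ) (k : ℕ) (hℓ0 : 0 < ℓ)
    (hr1 : 3/5*ℓ ≤ r) (hr2 : r ≤ 4/5*ℓ) (hL : L = ℓ + 2*r*k)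
    (s : ℝ) (hs : |s| ≤ L/2) (m : ℤ)
    (hm : m = max (-(k:ℤ)) (min (k:ℤ) ⌊s/r + 1/2⌋)) :
    |s - r*m| ≤ ℓ/2 ∧ (m < (k:ℤ) → s - r*m ≤ 2/5*ℓ) ∧
      ((-(k:ℤ)) < m → -(2/5*ℓ) ≤ s - r*m) := by
  have hr0 : 0 < r := by linarith
  set q : ℤ := ⌊s/r + 1/2⌋ with hq
  have hq1 : (q:ℝ) ≤ s/r + 1/2 := Int.floor_le _
  have hq2 : s/r + 1/2 < q + 1 := Int.lt_floor_add_one _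
  have hs1 : -(L/2) ≤ s := neg_le_of_abs_le hs
  have hs2 : s ≤ L/2 := le_of_abs_le hs
  have e1 : ((q:ℝ) - 1/2) * r ≤ s := (le_div_iff₀ hr0).mp (by linarith)
  have e2 : s < ((q:ℝ) + 1/2) * r := (div_lt_iff₀ hr0).mp (by linarith)
  rcases le_or_gt q (-(k:ℤ)) with h1 | h1
  · have hmk : m = -(k:ℤ) := by omega
    subst hmk
    have hq1' : (q:ℝ) ≤ -(k:ℝ) := by exact_mod_cast h1
    have e3 : r*(q:ℝ) ≤ r*(-(k:ℝ)) := mul_le_mul_of_nonneg_left hq1' hr0.le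
    push_cast
    refine ⟨abs_le.mpr ⟨by nlinarith, by nlinarith⟩, fun _ => by nlinarith, fun h => ?_⟩
    exfalso; omega
  · rcases le_or_gt (k:ℤ) q with h2 | h2
    · have hmk : m = (k:ℤ) := by omega
      subst hmk
      have hq2' : (k:ℝ) ≤ (q:ℝ) := by exact_mod_cast h2
      have e3 : r*(k:ℝ) ≤ r*(q:ℝ) := mul_le_mul_of_nonneg_left hq2' hr0.le
      push_cast
      refine ⟨abs_le.mpr ⟨by nlinarith, by nlinarith⟩, fun h => absurd h (lt_irrefl _), fun _ => by nlinarith⟩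
    · have hmk : m = q := by omega
      subst hmk
      refine ⟨abs_le.mpr ⟨by nlinarith, by nlinarith⟩, fun _ => by nlinarith, fun _ => by nlinarith⟩

/-- For a suitable `ℓ`-cover, the box `Λ_L(x₀)` is the union of the shrunken boxes
`Λ_ℓ^{Λ_L, ℓ/10}(a)` over the centers `a ∈ Ξ_{L,ℓ}`. -/
theorem box_eq_union_shrunken (d : ℕ) (hd : 0 < d) (L ℓ ρ : ℝ) (hℓ : 1 ≤ ℓ)
    (hℓL : ℓ ≤ L / 6) (hρ : ρ ∈ Set.Icc (3/5 : ℝ) (4/5)) (k : ℕ) (hk : 1 ≤ k)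
    (hρk : ρ = (L - ℓ) / (2 * ℓ * k)) (x₀ : Fin d → ℝ) :
    latticeBox d L x₀ = ⋃ a ∈ coverCenters d L ℓ ρ x₀, shrunkenBox d L ℓ x₀ a := by
  have hk1 : (1:ℝ) ≤ k := by exact_mod_cast hk
  have hℓ0 : (0:ℝ) < ℓ := by linarith
  have hr1 : 3/5*ℓ ≤ ρ*ℓ := by nlinarith [hρ.1]
  have hr2 : ρ*ℓ ≤ 4/5*ℓ := by nlinarith [hρ.2]
  have hr0 : 0 < ρ*ℓ := by linarith
  have hL : L = ℓ + 2*(ρ*ℓ)*k := by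
    have hne : (2*ℓ*(k:ℝ)) ≠ 0 := ne_of_gt (by nlinarith)
    rw [eq_div_iff hne] at hρk
    nlinarith [hρk]
  ext y
  constructor
  · intro hy
    have hy' : ∀ i, |((y i : ℤ):ℝ) - x₀ i| ≤ L/2 := hy
    set m : Fin d → ℤ :=
      fun i => max (-(k:ℤ)) (min (k:ℤ) ⌊(((y i : ℤ):ℝ) - x₀ i)/(ρ*ℓ) + 1/2⌋) with hm
    have key : ∀ i, |(((y i:ℤ):ℝ) - x₀ i) - (ρ*ℓ)*(m i)| ≤ ℓ/2 ∧
        (m i < (k:ℤ) → (((y i:ℤ):ℝ) - x₀ i) - (ρ*ℓ)*(m i) ≤ 2/5*ℓ) ∧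
        ((-(k:ℤ)) < m i → -(2/5*ℓ) ≤ (((y i:ℤ):ℝ) - x₀ i) - (ρ*ℓ)*(m i)) :=
      fun i => key_choice ℓ (ρ*ℓ) L k hℓ0 hr1 hr2 hL _ (hy' i) _ (by rw [hm])
    have hmb : ∀ i, -(k:ℤ) ≤ m i ∧ m i ≤ (k:ℤ) := by
      intro i
      have h : m i = max (-(k:ℤ))
          (min (k:ℤ) ⌊(((y i : ℤ):ℝ) - x₀ i)/(ρ*ℓ) + 1/2⌋) := by rw [hm]
      rw [h]
      exact ⟨le_max_left _ _, max_le (by omega) (min_le_left _ _)⟩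
    refine Set.mem_iUnion₂.mpr ⟨fun i => x₀ i + ρ*ℓ*(m i), ⟨⟨m, rfl⟩, ?_⟩, ?_, ?_⟩
    · intro i
      have hmi := hmb i
      have habs : |((m i : ℤ):ℝ)| ≤ (k:ℝ) := by
        rw [abs_le]
        constructor
        · exact_mod_cast hmi.1
        · exact_mod_cast hmi.2
      have e : |x₀ i + ρ*ℓ*(m i) - x₀ i| = (ρ*ℓ) * |((m i : ℤ):ℝ)| := by
        rw [show x₀ i + ρ*ℓ*(m i) - x₀ i = ρ*ℓ*((m i : ℤ):ℝ) by ring, abs_mul, abs_of_pos hr0]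
      rw [e]
      nlinarith [abs_nonneg ((m i : ℤ):ℝ)]
    · intro i
      have h := (key i).1
      have e : ((y i:ℤ):ℝ) - (x₀ i + ρ*ℓ*(m i)) = (((y i:ℤ):ℝ) - x₀ i) - (ρ*ℓ)*(m i) := by
        ring
      show |((y i:ℤ):ℝ) - (x₀ i + ρ*ℓ*(m i))| ≤ ℓ/2
      rw [e]; exact h
    · intro z hz hz'
      have hz2 : ∀ i, |((z i:ℤ):ℝ) - x₀ i| ≤ L/2 := hz
      simp only [latticeBox, Set.mem_setOf_eq, not_forall, not_le] at hz'
      obtain ⟨j, hj⟩ := hz'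
      have hsupj : ((y j - z j).natAbs : ℝ) ≤
          ((Finset.univ.sup fun i => (y i - z i).natAbs : ℕ):ℝ) := by
        have := Finset.le_sup (f := fun i => (y i - z i).natAbs) (Finset.mem_univ j)
        exact_mod_cast this
      have hcast : ((y j - z j).natAbs : ℝ) = |((y j:ℤ):ℝ) - ((z j:ℤ):ℝ)| := by
        rw [Nat.cast_natAbs]; push_cast; ring_nf
      have ht : (⌊ℓ/10⌋:ℝ) ≤ ℓ/10 := Int.floor_le _
      have p1 : ((y j:ℤ):ℝ) - z j ≤ |((y j:ℤ):ℝ) - ((z j:ℤ):ℝ)| := le_abs_self _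
      have p2 : -|((y j:ℤ):ℝ) - ((z j:ℤ):ℝ)| ≤ ((y j:ℤ):ℝ) - z j := neg_abs_le _
      have hsuff : (⌊ℓ/10⌋:ℝ) < |((y j:ℤ):ℝ) - ((z j:ℤ):ℝ)| → _ := fun hlt => by
        calc (⌊ℓ/10⌋:ℝ) < |((y j:ℤ):ℝ) - ((z j:ℤ):ℝ)| := hlt
          _ = ((y j - z j).natAbs : ℝ) := hcast.symm
          _ ≤ _ := hsupj
      refine hsuff ?_
      rcases lt_abs.mp hj with h | h
      · rcases lt_or_eq_of_le (hmb j).2 with hlt' | heq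
        · have hb := (key j).2.1 hlt'
          linarith
        · exfalso
          have ec : ρ*ℓ*((m j : ℤ):ℝ) = ρ*ℓ*(k:ℝ) := by rw [heq]; push_cast; ring
          have hzj := le_of_abs_le (hz2 j)
          linarith
      · rcases lt_or_eq_of_le (hmb j).1 with hlt' | heq
        · have hb := (key j).2.2 hlt'
          linarith
        · exfalso
          have ec : ρ*ℓ*((m j : ℤ):ℝ) = -(ρ*ℓ*(k:ℝ)) := by
            rw [← heq]; push_cast; ring
          have hzj := neg_le_of_abs_le (hz2 j)
          linarith
  · intro h
    obtain ⟨a, ha, hmem⟩ := Set.mem_iUnion₂.mp h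
    obtain ⟨⟨mm, hamm⟩, habd⟩ := ha
    subst hamm
    have hy1 : ∀ i, |((y i:ℤ):ℝ) - (x₀ i + ρ*ℓ*(mm i))| ≤ ℓ/2 := hmem.1
    intro i
    have hbd := habd i
    have e : (x₀ i + ρ*ℓ*(mm i)) - x₀ i = ρ*ℓ*((mm i : ℤ):ℝ) := by ring
    rw [e, abs_mul, abs_of_pos hr0] at hbd
    have hmk : |((mm i : ℤ):ℝ)| ≤ (k:ℝ) := by
      by_contra hc
      push_neg at hc
      have h1 : (k:ℤ) < |mm i| := by exact_mod_cast (by push_cast; exact hc : ((k:ℤ):ℝ) < ((|mm i|:ℤ):ℝ))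
      have h2 : (k:ℝ) + 1 ≤ |((mm i : ℤ):ℝ)| := by
        have : (k:ℤ) + 1 ≤ |mm i| := by omega
        calc (k:ℝ) + 1 = (((k:ℤ) + 1 : ℤ):ℝ) := by push_cast; ring
          _ ≤ ((|mm i|:ℤ):ℝ) := by exact_mod_cast this
          _ = |((mm i : ℤ):ℝ)| := by push_cast; ring
      nlinarith
    have tri : |((y i:ℤ):ℝ) - x₀ i| ≤ |((y i:ℤ):ℝ) - (x₀ i + ρ*ℓ*(mm i))| +
        |(x₀ i + ρ*ℓ*(mm i)) - x₀ i| := abs_sub_le _ _ _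
    rw [e, abs_mul, abs_of_pos hr0] at tri
    have := hy1 i
    nlinarith [mul_le_mul_of_nonneg_left hmk hr0.le]
end

section
/- Let P and Q be orthogonal projections on a finite-dimensional Hilbert space with ‖(1 − Q)P‖ < 1. Then tr P ≤ tr Q (equivalently, rank P ≤ rank Q). -/
/-!
A vector `x ∈ range P` with `Q x = 0` is a fixed point of `(1 - Q) P`, an operator of norm `< 1`,
so `x = 0`. Hence `Q` is injective on `range P`, which gives `rank P ≤ rank Q`; for idempotents
the trace is the rank.
-/

open LinearMap Module

theorem ContinuousLinearMap.eq_zero_of_apply_eq_self_of_norm_lt_one {𝕜 E : Type*}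
    [NontriviallyNormedField 𝕜] [NormedAddCommGroup E] [NormedSpace 𝕜 E]
    {T : E →L[𝕜] E} (hT : ‖T‖ < 1) {x : E} (hx : T x = x) : x = 0 := by
  have hle : ‖x‖ ≤ ‖T‖ * ‖x‖ := by simpa only [hx] using T.le_opNorm x
  exact norm_le_zero_iff.mp (by nlinarith [norm_nonneg x])

theorem LinearMap.finrank_range_le_of_disjoint_ker {K V W U : Type*} [Field K]
    [AddCommGroup V] [Module K V] [AddCommGroup W] [Module K W] [AddCommGroup U] [Module K U]
    [FiniteDimensional K U] {f : V →ₗ[K] W} {g : W →ₗ[K] U} (h : Disjoint (range f) (ker g)) :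
    finrank K (range f) ≤ finrank K (range g) :=
  finrank_le_finrank_of_injective
    ((injective_restrict_iff (fun x _ ↦ mem_range_self g x)).mpr h)

theorem ContinuousLinearMap.disjoint_range_ker_of_norm_sub_mul_lt_one {𝕜 E : Type*}
    [NontriviallyNormedField 𝕜] [NormedAddCommGroup E] [NormedSpace 𝕜 E]
    {P Q : E →L[𝕜] E} (hP : IsIdempotentElem P) (h : ‖(1 - Q) * P‖ < 1) :
    Disjoint (range (P : E →ₗ[𝕜] E)) (ker (Q : E →ₗ[𝕜] E)) := by
  rw [Submodule.disjoint_def]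
  rintro _ ⟨y, rfl⟩ (hQ : Q (P y) = 0)
  refine eq_zero_of_apply_eq_self_of_norm_lt_one h ?_
  have hPP : P (P y) = P y := congrArg (· y) hP
  simp [hPP, hQ]

theorem projection_trace_comparison_general (E : Type) [NormedAddCommGroup E]
    [InnerProductSpace ℂ E] [FiniteDimensional ℂ E]
    (P Q : E →L[ℂ] E)
    (hP1 : IsIdempotentElem P)
    (hQ1 : IsIdempotentElem Q)
    (h : ‖(1 - Q) * P‖ < 1) :
    (LinearMap.trace ℂ E (P : E →ₗ[ℂ] E)).re ≤ (LinearMap.trace ℂ E (Q : E →ₗ[ℂ] E)).re ∧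
      Module.finrank ℂ (LinearMap.range (P : E →ₗ[ℂ] E)) ≤
        Module.finrank ℂ (LinearMap.range (Q : E →ₗ[ℂ] E)) := by
  have hrank := finrank_range_le_of_disjoint_ker
    (ContinuousLinearMap.disjoint_range_ker_of_norm_sub_mul_lt_one hP1 h)
  refine ⟨?_, hrank⟩
  rw [(ContinuousLinearMap.isIdempotentElem_toLinearMap_iff.mpr hP1).isProj_range.trace,
    (ContinuousLinearMap.isIdempotentElem_toLinearMap_iff.mpr hQ1).isProj_range.trace]
  exact_mod_cast hrank

/-- If `P, Q` are orthogonal projections on a finite-dimensional Hilbert space with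
`‖(1 - Q)P‖ < 1`, then `tr P ≤ tr Q` (equivalently `rank P ≤ rank Q`). -/
theorem projection_trace_comparison (E : Type) [NormedAddCommGroup E]
    [InnerProductSpace ℂ E] [FiniteDimensional ℂ E]
    (P Q : E →L[ℂ] E)
    (hP1 : IsIdempotentElem P) (hP2 : IsSelfAdjoint P)
    (hQ1 : IsIdempotentElem Q) (hQ2 : IsSelfAdjoint Q)
    (h : ‖(1 - Q) * P‖ < 1) :
    (LinearMap.trace ℂ E (P : E →ₗ[ℂ] E)).re ≤ (LinearMap.trace ℂ E (Q : E →ₗ[ℂ] E)).re ∧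
      Module.finrank ℂ (LinearMap.range (P : E →ₗ[ℂ] E)) ≤
        Module.finrank ℂ (LinearMap.range (Q : E →ₗ[ℂ] E)) :=
  projection_trace_comparison_general E P Q hP1 hQ1 h
end

section
/- Let H_ε = −εΔ + V on ℓ²(Θ) for a finite set Θ ⊂ ℤ^d, and suppose |V(x) − V(y)| ≥ η for all x ≠ y in Θ. If ε < η/(4d), then H_{ε,Θ} has an eigensystem {(ψ_x, λ_x)}_{x∈Θ} with |λ_x − λ_y| ≥ η − 4dε > 0 for all x ≠ y, and |ψ_y(x)| ≤ (2dε/(η − 2dε))^{|x−y|_1} for all x, y ∈ Θ. -/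
/-- ℓ¹ distance on `ℤ^d`. -/
def dist1 {d : ℕ} (x y : Fin d → ℤ) : ℕ := ∑ i, (x i - y i).natAbs

/-- The restriction `H_{ε,Θ} = χ_Θ (-εΔ + V) χ_Θ` of the discrete Schrödinger operator to
`Θ ⊂ ℤ^d`, acting on functions supported in `Θ`. -/
noncomputable def Hop {d : ℕ} (ε : ℝ) (V : (Fin d → ℤ) → ℝ) (Θ : Finset (Fin d → ℤ))
    (ψ : (Fin d → ℤ) → ℂ) : (Fin d → ℤ) → ℂ := fun x =>
  if x ∈ Θ then
    -(ε : ℂ) * (∑ y ∈ Θ.filter fun y => dist1 x y = 1, ψ y) + (V x : ℂ) * ψ x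
  else 0

/-!
Let `H` be the matrix of `H_{ε,Θ}` on `ℓ²(Θ)`: its diagonal is `V`, and each off-diagonal row
has `ℓ¹` norm at most `2dε`, since a site has at most `2d` lattice neighbours. By Gershgorin's
theorem every eigenvalue of `H` lies within `2dε` of some `V x`; conversely, `H` being Hermitian,
testing it against `δ_x` shows that every `V x` lies within `2dε` of some eigenvalue. As the
values of `V` are `η`-separated and `4dε < η`, this matches eigenvalues with sites bijectively,
which gives the separation `η - 4dε`. At a site `z ≠ y` the eigenvalue equation of `ψ_y` reads
`(λ_y - V z) ψ_y(z) = -ε ∑_{z' ~ z} ψ_y(z')` with `|λ_y - V z| ≥ η - 2dε`, so `|ψ_y|` loses a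
factor `2dε / (η - 2dε)` with every lattice step away from `y`.
-/

open Finset Function Matrix Metric

section Lattice
variable {d : ℕ}

theorem dist1_self (x : Fin d → ℤ) : dist1 x x = 0 := by simp [dist1]

theorem dist1_comm (x y : Fin d → ℤ) : dist1 x y = dist1 y x := by
  simp only [dist1, ← Int.natAbs_neg (x _ - y _), neg_sub]

theorem dist1_triangle (x y z : Fin d → ℤ) : dist1 x z ≤ dist1 x y + dist1 y z := by
  rw [dist1, dist1, dist1, ← sum_add_distrib]
  gcongr with i
  simpa using Int.natAbs_add_le (x i - y i) (y i - z i)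

theorem exists_natAbs_sub_eq_ite_of_dist1_eq_one {x y : Fin d → ℤ} (h : dist1 x y = 1) :
    ∃ i, ∀ j, (x j - y j).natAbs = if j = i then 1 else 0 := by
  obtain ⟨i, hi⟩ := (Finsupp.sum_eq_one_iff
    (Finsupp.equivFunOnFinite.symm fun j => (x j - y j).natAbs)).mp (by
      rwa [Finsupp.sum_fintype _ _ fun _ => rfl])
  exact ⟨i, fun j => by simpa [Finsupp.single_apply, eq_comm] using DFunLike.congr_fun hi j⟩

theorem card_filter_dist1_eq_one_le (Θ : Finset (Fin d → ℤ)) (x : Fin d → ℤ) :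
    #{y ∈ Θ | dist1 x y = 1} ≤ 2 * d := by
  classical
  calc #{y ∈ Θ | dist1 x y = 1}
      ≤ #((univ ×ˢ ({-1, 1} : Finset ℤ)).image fun p => x + Pi.single p.1 p.2) := by
        refine card_le_card fun y hy => ?_
        obtain ⟨i, hi⟩ := exists_natAbs_sub_eq_ite_of_dist1_eq_one (mem_filter.mp hy).2
        refine mem_image.mpr ⟨(i, y i - x i), ?_, funext fun j => ?_⟩
        · have := hi i
          simp only [if_true, mem_product, mem_univ, mem_insert, mem_singleton, true_and]
            at this ⊢
          omega
        · have := hi j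
          split_ifs at this with hj
          · simp [hj]
          · simp [hj]
            omega
    _ ≤ #(univ ×ˢ ({-1, 1} : Finset ℤ)) := card_image_le
    _ = 2 * d := by simp [mul_comm]

theorem le_pow_dist1_of_le_mul_neighbors {f : (Fin d → ℤ) → ℝ} {q : ℝ} (hq : 0 ≤ q)
    (y : Fin d → ℤ) (hf : ∀ z, f z ≤ 1)
    (hstep : ∀ z ≠ y, ∀ C, 0 ≤ C → (∀ z', dist1 z z' = 1 → f z' ≤ C) → f z ≤ q * C)
    (x : Fin d → ℤ) : f x ≤ q ^ dist1 x y := by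
  suffices ∀ m x, m ≤ dist1 x y → f x ≤ q ^ m from this _ x le_rfl
  intro m
  induction m with
  | zero => exact fun x _ => by simpa using hf x
  | succ m ih =>
    intro x hx
    have hxy : x ≠ y := by rintro rfl; simp [dist1_self] at hx
    rw [pow_succ']
    exact hstep x hxy _ (pow_nonneg hq m) fun z hz => ih z (by linarith [dist1_triangle x z y])

end Lattice

theorem EuclideanSpace.norm_le_sum_norm {𝕜 ι : Type*} [RCLike 𝕜] [Fintype ι]
    (x : EuclideanSpace 𝕜 ι) : ‖x‖ ≤ ∑ i, ‖x i‖ := by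
  classical
  calc ‖x‖ = ‖∑ i, x i • EuclideanSpace.single i (1 : 𝕜)‖ := by
        conv_lhs => rw [← (EuclideanSpace.basisFun ι 𝕜).sum_repr x]
        simp only [EuclideanSpace.basisFun_repr, EuclideanSpace.basisFun_apply]
    _ ≤ ∑ i, ‖x i‖ := (norm_sum_le _ _).trans (sum_le_sum fun i _ => by simp [norm_smul])

namespace Matrix.IsHermitian
variable {𝕜 n : Type*} [RCLike 𝕜] [Fintype n] [DecidableEq n] {A : Matrix n n 𝕜}

theorem repr_toEuclideanLin_sub_smul (hA : A.IsHermitian) (c : ℝ) (v : EuclideanSpace 𝕜 n)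
    (i : n) :
    hA.eigenvectorBasis.repr (toEuclideanLin A v - (c : 𝕜) • v) i =
      ((hA.eigenvalues i - c : ℝ) : 𝕜) * hA.eigenvectorBasis.repr v i := by
  have hb : toEuclideanLin A (hA.eigenvectorBasis i) =
      (hA.eigenvalues i : 𝕜) • hA.eigenvectorBasis i := by
    ext z
    simp only [toLpLin_apply, hA.mulVec_eigenvectorBasis, RCLike.real_smul_eq_coe_smul (K := 𝕜)]
    rfl
  simp only [OrthonormalBasis.repr_apply_apply, inner_sub_right, inner_smul_right]
  rw [← isSymmetric_toEuclideanLin_iff.mpr hA _ v, hb, inner_smul_left, RCLike.conj_ofReal]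
  push_cast
  ring

theorem exists_abs_eigenvalue_sub_mul_norm_le (hA : A.IsHermitian) (c : ℝ)
    {v : EuclideanSpace 𝕜 n} (hv : v ≠ 0) :
    ∃ i, |hA.eigenvalues i - c| * ‖v‖ ≤ ‖toEuclideanLin A v - (c : 𝕜) • v‖ := by
  have : Nonempty n := not_isEmpty_iff.mp fun _ => hv (Subsingleton.elim _ _)
  obtain ⟨i, -, hi⟩ := univ.exists_min_image (fun i => |hA.eigenvalues i - c|) univ_nonempty
  refine ⟨i, le_of_sq_le_sq ?_ (norm_nonneg _)⟩
  set b := hA.eigenvectorBasis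
  calc (|hA.eigenvalues i - c| * ‖v‖) ^ 2
      = ∑ j, |hA.eigenvalues i - c| ^ 2 * ‖b.repr v j‖ ^ 2 := by
        rw [mul_pow, ← b.repr.norm_map, EuclideanSpace.norm_sq_eq, mul_sum]
    _ ≤ ∑ j, ‖b.repr (toEuclideanLin A v - (c : 𝕜) • v) j‖ ^ 2 := by
        gcongr with j
        rw [repr_toEuclideanLin_sub_smul, norm_mul, mul_pow, RCLike.norm_ofReal]
        gcongr ?_ * _
        exact pow_le_pow_left₀ (abs_nonneg _) (hi j (mem_univ j)) 2
    _ = ‖toEuclideanLin A v - (c : 𝕜) • v‖ ^ 2 := by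
        rw [← EuclideanSpace.norm_sq_eq, b.repr.norm_map]

theorem hasEigenvalue_eigenvalues (hA : A.IsHermitian) (i : n) :
    Module.End.HasEigenvalue (toLin' A) (hA.eigenvalues i : 𝕜) := by
  refine Module.End.hasEigenvalue_of_hasEigenvector (x := (hA.eigenvectorBasis i).ofLp) ⟨?_, ?_⟩
  · rw [Module.End.mem_eigenspace_iff, toLin'_apply, hA.mulVec_eigenvectorBasis,
      RCLike.real_smul_eq_coe_smul (K := 𝕜)]
  · exact fun h => hA.eigenvectorBasis.orthonormal.ne_zero i
      (by simpa using congrArg (WithLp.toLp 2) h)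

theorem eigenvalue_mem_closedBall_diag (hA : A.IsHermitian) (i : n) :
    ∃ k, (hA.eigenvalues i : 𝕜) ∈ closedBall (A k k) (∑ j ∈ univ.erase k, ‖A k j‖) :=
  eigenvalue_mem_ball (hA.hasEigenvalue_eigenvalues i)

theorem exists_eigenvalue_mem_closedBall_diag (hA : A.IsHermitian) (k : n) :
    ∃ i, (hA.eigenvalues i : 𝕜) ∈ closedBall (A k k) (∑ j ∈ univ.erase k, ‖A k j‖) := by
  set e := EuclideanSpace.single k (1 : 𝕜)
  set w := toEuclideanLin A e - (RCLike.re (A k k) : 𝕜) • e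
  have hw : ∀ j, w j = if j = k then 0 else A j k := by
    intro j
    by_cases hj : j = k
    · subst hj
      simp [w, e, hA.coe_re_apply_self]
    · simp [w, e, hj]
  have hw_norm : ‖w‖ ≤ ∑ j ∈ univ.erase k, ‖A k j‖ := by
    refine (EuclideanSpace.norm_le_sum_norm w).trans_eq ?_
    rw [← sum_erase _ (f := fun j => ‖w j‖) (a := k) (by simp [hw])]
    refine sum_congr rfl fun j hj => ?_
    rw [hw, if_neg (ne_of_mem_erase hj), ← hA.apply, norm_star]
  obtain ⟨i, hi⟩ := hA.exists_abs_eigenvalue_sub_mul_norm_le (RCLike.re (A k k)) (v := e)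
    (by simp [e])
  refine ⟨i, ?_⟩
  rw [mem_closedBall, dist_eq_norm, ← hA.coe_re_apply_self, ← RCLike.ofReal_sub,
    RCLike.norm_ofReal]
  simpa [e] using hi.trans hw_norm

end Matrix.IsHermitian

theorem abs_sub_sub_le_abs_sub {a b u v ρ ρ' : ℝ} (ha : |a - u| ≤ ρ) (hb : |b - v| ≤ ρ') :
    |u - v| - ρ - ρ' ≤ |a - b| := by
  have h₁ := abs_sub_le u a v
  have h₂ := abs_sub_le a b v
  rw [abs_sub_comm u a] at h₁
  linarith

theorem exists_equiv_abs_sub_le {ι : Type*} [Finite ι] {μ V : ι → ℝ} {ρ η : ℝ}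
    (hV : ∀ x y, x ≠ y → η ≤ |V x - V y|) (hρ : 2 * ρ < η)
    (hμV : ∀ i, ∃ x, |μ i - V x| ≤ ρ) (hVμ : ∀ x, ∃ i, |μ i - V x| ≤ ρ) :
    ∃ σ : ι ≃ ι, ∀ x, |μ (σ x) - V x| ≤ ρ := by
  choose g hg using hμV
  have hg_surj : Surjective g := fun x => by
    obtain ⟨i, hi⟩ := hVμ x
    refine ⟨i, by_contra fun hne => ?_⟩
    have := abs_sub_sub_le_abs_sub (hg i) hi
    rw [sub_self, abs_zero] at this
    linarith [hV _ _ hne]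
  let σ := Equiv.ofBijective g (Finite.surjective_iff_bijective.mp hg_surj)
  exact ⟨σ.symm, fun x => by
    simpa only [σ, Equiv.ofBijective_apply_symm_apply] using hg (σ.symm x)⟩

theorem norm_le_one_of_sum_conj_mul_self_eq_one {α 𝕜 : Type*} [RCLike 𝕜] {s : Finset α}
    {f : α → 𝕜} (hf : ∀ z ∉ s, f z = 0) (h : ∑ z ∈ s, starRingEnd 𝕜 (f z) * f z = 1) (z : α) :
    ‖f z‖ ≤ 1 := by
  by_cases hz : z ∈ s
  · have hsum : ∑ z ∈ s, ‖f z‖ ^ 2 = 1 := by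
      exact_mod_cast (by simpa [RCLike.conj_mul] using h : ((∑ z ∈ s, ‖f z‖ ^ 2 : ℝ) : 𝕜) = 1)
    refine (sq_le_one_iff₀ (norm_nonneg _)).mp ?_
    rw [← hsum]
    exact single_le_sum (f := fun z => ‖f z‖ ^ 2) (fun _ _ => by positivity) hz
  · simp [hf z hz]

section Schrodinger
variable {d : ℕ} (ε : ℝ) (V : (Fin d → ℤ) → ℝ) (Θ : Finset (Fin d → ℤ))

noncomputable def schrodingerMatrix : Matrix Θ Θ ℂ :=
  of fun x z => (if dist1 x.1 z.1 = 1 then -(ε : ℂ) else 0) + if x = z then (V x : ℂ) else 0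

theorem schrodingerMatrix_isHermitian : (schrodingerMatrix ε V Θ).IsHermitian := by
  ext x z
  simp only [schrodingerMatrix, conjTranspose_apply, of_apply, star_add, dist1_comm z.1,
    eq_comm (a := z)]
  split_ifs <;> simp_all

theorem schrodingerMatrix_apply_self (x : Θ) : schrodingerMatrix ε V Θ x x = V x := by
  simp [schrodingerMatrix, dist1_self]

theorem sum_norm_schrodingerMatrix_le {ε : ℝ} (hε : 0 ≤ ε) (x : Θ) :
    ∑ z ∈ univ.erase x, ‖schrodingerMatrix ε V Θ x z‖ ≤ 2 * d * ε :=
  calc ∑ z ∈ univ.erase x, ‖schrodingerMatrix ε V Θ x z‖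
      = ∑ z ∈ univ.erase x, if dist1 x.1 z.1 = 1 then ε else 0 := by
        refine sum_congr rfl fun z hz => ?_
        rw [schrodingerMatrix, of_apply, if_neg (ne_of_mem_erase hz).symm, add_zero]
        split_ifs <;> simp [abs_of_nonneg hε]
    _ ≤ ∑ z : Θ, if dist1 x.1 z.1 = 1 then ε else 0 :=
        sum_le_sum_of_subset_of_nonneg (erase_subset _ _) fun _ _ _ => by positivity
    _ = #{y ∈ Θ | dist1 x y = 1} * ε := by
        rw [sum_coe_sort Θ (fun y => if dist1 x.1 y = 1 then ε else 0), ← sum_filter,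
          sum_const, nsmul_eq_mul]
    _ ≤ 2 * d * ε := by
        gcongr
        exact_mod_cast card_filter_dist1_eq_one_le Θ x

theorem Hop_extend (u : Θ → ℂ) :
    Hop ε V Θ (extend Subtype.val u 0) = extend Subtype.val (schrodingerMatrix ε V Θ *ᵥ u) 0 := by
  funext x
  by_cases hx : x ∈ Θ
  · lift x to Θ using hx
    rw [Subtype.val_injective.extend_apply, Hop, if_pos x.2]
    simp only [mulVec, dotProduct, schrodingerMatrix, of_apply, add_mul, sum_add_distrib, ite_mul,
      zero_mul, sum_ite_eq, mem_univ, if_true, sum_filter, mul_sum]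
    congr 1
    · rw [← sum_coe_sort Θ]
      refine sum_congr rfl fun z _ => ?_
      split_ifs <;> simp
    · rw [Subtype.val_injective.extend_apply]
  · rw [Hop, if_neg hx, extend_apply' _ _ _ (by simpa using hx)]
    rfl
theorem abs_sub_mul_norm_le_of_Hop_eq {ε : ℝ} (hε : 0 ≤ ε) {ψ : (Fin d → ℤ) → ℂ} {lam : ℝ}
    {x : Fin d → ℤ} (hx : x ∈ Θ) (hψ : Hop ε V Θ ψ x = lam * ψ x) {C : ℝ} (hC0 : 0 ≤ C)
    (hC : ∀ y, dist1 x y = 1 → ‖ψ y‖ ≤ C) :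
    |lam - V x| * ‖ψ x‖ ≤ 2 * d * ε * C := by
  rw [Hop, if_pos hx] at hψ
  have key : ((lam - V x : ℝ) : ℂ) * ψ x = -ε * ∑ y ∈ Θ with dist1 x y = 1, ψ y := by
    push_cast
    linear_combination -hψ
  calc |lam - V x| * ‖ψ x‖ = ε * ‖∑ y ∈ Θ with dist1 x y = 1, ψ y‖ := by
        simpa only [norm_mul, Complex.norm_real, Real.norm_eq_abs, norm_neg,
          abs_of_nonneg hε] using congrArg norm key
    _ ≤ ε * (#{y ∈ Θ | dist1 x y = 1} * C) := by
        gcongr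
        refine (norm_sum_le _ _).trans ?_
        simpa using sum_le_card_nsmul _ _ _ fun y hy => hC y (mem_filter.mp hy).2
    _ ≤ ε * (2 * d * C) := by
        gcongr
        exact_mod_cast card_filter_dist1_eq_one_le Θ x
    _ = 2 * d * ε * C := by ring

theorem norm_le_pow_dist1_of_Hop_eq {ε : ℝ} (hε : 0 ≤ ε) {ψ : (Fin d → ℤ) → ℂ} {lam g : ℝ}
    {y : Fin d → ℤ} (hg : 0 < g) (hψ : ∀ z, Hop ε V Θ ψ z = lam * ψ z)
    (hsupp : ∀ z ∉ Θ, ψ z = 0) (hψ1 : ∀ z, ‖ψ z‖ ≤ 1)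
    (hgap : ∀ z ∈ Θ, z ≠ y → g ≤ |lam - V z|) (x : Fin d → ℤ) :
    ‖ψ x‖ ≤ (2 * d * ε / g) ^ dist1 x y := by
  refine le_pow_dist1_of_le_mul_neighbors (f := fun z => ‖ψ z‖) (by positivity) y hψ1
    (fun z hzy C hC0 hC => ?_) x
  by_cases hz : z ∈ Θ
  · have hstep := abs_sub_mul_norm_le_of_Hop_eq V Θ hε hz (hψ z) hC0 hC
    rw [div_mul_eq_mul_div, le_div_iff₀ hg]
    nlinarith [hgap z hz hzy, norm_nonneg (ψ z)]
  · simp only [hsupp z hz, norm_zero]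
    positivity

theorem exists_eigensystem_abs_sub_le {ε η : ℝ} (hε : 0 ≤ ε)
    (hV : ∀ x ∈ Θ, ∀ y ∈ Θ, x ≠ y → η ≤ |V x - V y|) (hεη : 4 * d * ε < η) :
    ∃ (φ : Θ → (Fin d → ℤ) → ℂ) (lam : Θ → ℝ),
      (∀ x z, z ∉ Θ → φ x z = 0) ∧
      (∀ x z, Hop ε V Θ (φ x) z = lam x * φ x z) ∧
      (∀ x y, ∑ z ∈ Θ, starRingEnd ℂ (φ x z) * φ y z = if x = y then 1 else 0) ∧
      ∀ x, |lam x - V x| ≤ 2 * d * ε := by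
  set H := schrodingerMatrix ε V Θ
  have hH : H.IsHermitian := schrodingerMatrix_isHermitian ε V Θ
  set b := hH.eigenvectorBasis
  have hnear : ∀ i k, (hH.eigenvalues i : ℂ) ∈ closedBall (H k k)
      (∑ j ∈ univ.erase k, ‖H k j‖) → |hH.eigenvalues i - V k| ≤ 2 * d * ε := fun i k hik => by
    rw [mem_closedBall, dist_eq_norm, show H k k = V k from schrodingerMatrix_apply_self ε V Θ k,
      ← Complex.ofReal_sub, Complex.norm_real, Real.norm_eq_abs] at hik
    exact hik.trans (sum_norm_schrodingerMatrix_le V Θ hε k)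
  obtain ⟨σ, hσ⟩ := exists_equiv_abs_sub_le (μ := hH.eigenvalues) (V := fun x : Θ => V x)
    (fun x y hxy => hV x x.2 y y.2 (Subtype.coe_ne_coe.mpr hxy)) (by linarith)
    (fun i => (hH.eigenvalue_mem_closedBall_diag i).imp (hnear i))
    (fun k => (hH.exists_eigenvalue_mem_closedBall_diag k).imp fun i => hnear i k)
  refine ⟨fun x => extend Subtype.val (b (σ x)) 0, fun x => hH.eigenvalues (σ x),
    fun x z hz => extend_apply' _ _ _ (by simpa using hz), fun x z => ?_, fun x y => ?_, hσ⟩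
  · have := extend_smul (hH.eigenvalues (σ x)) Subtype.val (b (σ x)).ofLp 0
    rw [smul_zero] at this
    rw [Hop_extend, hH.mulVec_eigenvectorBasis, this]
    simp [Complex.real_smul]
  · convert orthonormal_iff_ite.mp b.orthonormal (σ x) (σ y) using 1
    · rw [← sum_coe_sort Θ]
      simp [PiLp.inner_apply, mul_comm]
    · simp [σ.injective.eq_iff]

end Schrodinger

theorem initial_step_eigensystem_general (d : ℕ) (ε η : ℝ) (hε : 0 < ε)
    (V : (Fin d → ℤ) → ℝ) (Θ : Finset (Fin d → ℤ))
    (hV : ∀ x ∈ Θ, ∀ y ∈ Θ, x ≠ y → η ≤ |V x - V y|)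
    (hεη : ε < η / (4 * d)) :
    ∃ (ψ : (Fin d → ℤ) → (Fin d → ℤ) → ℂ) (lam : (Fin d → ℤ) → ℝ),
      (∀ x ∈ Θ, ∀ z, z ∉ Θ → ψ x z = 0) ∧
      (∀ x ∈ Θ, ∀ z, Hop ε V Θ (ψ x) z = (lam x : ℂ) * ψ x z) ∧
      (∀ x ∈ Θ, ∀ y ∈ Θ,
        (∑ z ∈ Θ, (starRingEnd ℂ) (ψ x z) * ψ y z) = if x = y then 1 else 0) ∧
      (0 < η - 4 * d * ε) ∧
      (∀ x ∈ Θ, ∀ y ∈ Θ, x ≠ y → η - 4 * d * ε ≤ |lam x - lam y|) ∧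
      (∀ x ∈ Θ, ∀ y ∈ Θ,
        ‖ψ y x‖ ≤ ((2 * d * ε) / (η - 2 * d * ε)) ^ (dist1 x y)) := by
  have hd : 0 < d := Nat.pos_of_ne_zero fun h => by simp [h] at hεη; linarith
  have h4dε : 4 * d * ε < η := by rwa [lt_div_iff₀ (by positivity), mul_comm] at hεη
  have hdε : 0 ≤ 2 * d * ε := by positivity
  obtain ⟨φ, lam, hsupp, heig, horth, hnear⟩ := exists_eigensystem_abs_sub_le V Θ hε.le hV h4dε
  refine ⟨extend Subtype.val φ 0, extend Subtype.val lam 0, fun x hx z hz => ?_,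
    fun x hx z => ?_, fun x hx y hy => ?_, by linarith, fun x hx y hy hxy => ?_, fun x _ y hy => ?_⟩
  · lift x to Θ using hx
    simpa using hsupp x z hz
  · lift x to Θ using hx
    simpa using heig x z
  · lift x to Θ using hx
    lift y to Θ using hy
    simpa using horth x y
  · lift x to Θ using hx
    lift y to Θ using hy
    simp only [Subtype.val_injective.extend_apply]
    linarith [hV x x.2 y y.2 hxy, abs_sub_sub_le_abs_sub (hnear x) (hnear y)]
  · lift y to Θ using hy
    simp only [Subtype.val_injective.extend_apply]
    refine norm_le_pow_dist1_of_Hop_eq V Θ hε.le (by linarith) (heig y) (hsupp y)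
      (norm_le_one_of_sum_conj_mul_self_eq_one (hsupp y) (by simpa using horth y y))
      (fun z hz hzy => ?_) x
    linarith [hV z hz y y.2 hzy, abs_sub_comm (V z) (V y),
      abs_sub_sub_le_abs_sub (hnear y) (b := V z) (v := V z) (ρ' := 0) (by simp)]

/-- Elgart–Klein Lemma 4.4: if the potential values on a finite `Θ ⊂ ℤ^d` are `η`-separated
and `ε < η/(4d)`, then `H_{ε,Θ}` has an eigensystem `{(ψ_x, λ_x)}_{x∈Θ}` with
`|λ_x - λ_y| ≥ η - 4dε > 0` for `x ≠ y` and `|ψ_y(x)| ≤ (2dε/(η - 2dε))^{|x-y|₁}`. -/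
theorem initial_step_eigensystem (d : ℕ) (hd : 0 < d) (ε η : ℝ) (hε : 0 < ε) (hη : 0 < η)
    (V : (Fin d → ℤ) → ℝ) (Θ : Finset (Fin d → ℤ))
    (hV : ∀ x ∈ Θ, ∀ y ∈ Θ, x ≠ y → η ≤ |V x - V y|)
    (hεη : ε < η / (4 * d)) :
    ∃ (ψ : (Fin d → ℤ) → (Fin d → ℤ) → ℂ) (lam : (Fin d → ℤ) → ℝ),
      (∀ x ∈ Θ, ∀ z, z ∉ Θ → ψ x z = 0) ∧
      (∀ x ∈ Θ, ∀ z, Hop ε V Θ (ψ x) z = (lam x : ℂ) * ψ x z) ∧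
      (∀ x ∈ Θ, ∀ y ∈ Θ,
        (∑ z ∈ Θ, (starRingEnd ℂ) (ψ x z) * ψ y z) = if x = y then 1 else 0) ∧
      (0 < η - 4 * d * ε) ∧
      (∀ x ∈ Θ, ∀ y ∈ Θ, x ≠ y → η - 4 * d * ε ≤ |lam x - lam y|) ∧
      (∀ x ∈ Θ, ∀ y ∈ Θ,
        ‖ψ y x‖ ≤ ((2 * d * ε) / (η - 2 * d * ε)) ^ (dist1 x y)) :=
  initial_step_eigensystem_general d ε η hε V Θ hV hεη
end

section
/- Let Y ≥ 2, p > 0, d ≥ 1, and let (P_k)_{k≥0} be a sequence in [0,1] with lengths L_k = Y^k L_0 (L_0 > 1) satisfying P_{k+1} ≤ (2Y)^{2d} P_k² + (1/2) L_{k+1}^{−p} for all k. If 2(2Y)^{2d} P_0 < 1, then there exists K₀ ∈ ℕ with P_{K₀} ≤ L_{K₀}^{−p}. -/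
/-!
If `P_k > L_k^{-p}` for every `k`, the additive error term is dominated by `P_{k+1}/2`, so the
recursion becomes purely quadratic, `P_{k+1} < 2C P_k²`. Hence `2C P_k ≤ (2C P_0)^{2^k}` decays
doubly exponentially, while `L_k^{-p} = (Y^{-p})^k L_0^{-p}` decays only exponentially; for large
`k` this contradicts `P_k > L_k^{-p}`.
-/

lemma mul_three_mul_add_one_le_two_pow (M : ℕ) : M * (3 * M + 1) ≤ 2 ^ (3 * M) :=
  calc M * (3 * M + 1) ≤ (M + 1) ^ 3 := by ring_nf; omega
    _ ≤ (2 ^ M) ^ 3 := Nat.pow_le_pow_left Nat.lt_two_pow_self 3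
    _ = 2 ^ (3 * M) := by rw [← pow_mul, mul_comm]

lemma mul_le_pow_two_pow_of_le_mul_sq {C : ℝ} {P : ℕ → ℝ} (hC : 0 ≤ C) (hP : ∀ k, 0 ≤ P k)
    (hrec : ∀ k, P (k + 1) ≤ C * P k ^ 2) (k : ℕ) : C * P k ≤ (C * P 0) ^ 2 ^ k := by
  induction k with
  | zero => simp
  | succ k ih =>
    calc C * P (k + 1) ≤ (C * P k) ^ 2 := by nlinarith [hrec k]
      _ ≤ ((C * P 0) ^ 2 ^ k) ^ 2 := pow_le_pow_left₀ (mul_nonneg hC (hP k)) ih 2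
      _ = (C * P 0) ^ 2 ^ (k + 1) := by rw [← pow_mul, pow_succ]

lemma exists_pow_two_pow_le_pow_mul {q a b : ℝ} (hq₀ : 0 ≤ q) (hq₁ : q < 1) (ha : 0 < a)
    (hb : 0 < b) : ∃ k : ℕ, q ^ 2 ^ k ≤ a ^ k * b := by
  obtain ⟨M, hM⟩ := exists_pow_lt_of_lt_one (lt_min ha hb) hq₁
  obtain ⟨hMa, hMb⟩ := le_min_iff.mp hM.le
  refine ⟨3 * M, ?_⟩
  calc q ^ 2 ^ (3 * M) ≤ q ^ (M * (3 * M + 1)) :=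
        pow_le_pow_of_le_one hq₀ hq₁.le (mul_three_mul_add_one_le_two_pow M)
    _ = (q ^ M) ^ (3 * M) * q ^ M := by rw [pow_mul, pow_succ]
    _ ≤ a ^ (3 * M) * b :=
        mul_le_mul (pow_le_pow_left₀ (by positivity) hMa _) hMb (by positivity) (by positivity)

lemma exists_le_pow_mul_of_le_mul_sq_add {C a b : ℝ} {P : ℕ → ℝ} (hC : 1 ≤ 2 * C) (ha : 0 < a)
    (hb : 0 < b) (hrec : ∀ k, P (k + 1) ≤ C * P k ^ 2 + 1 / 2 * (a ^ (k + 1) * b))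
    (hinit : 2 * C * P 0 < 1) : ∃ k, P k ≤ a ^ k * b := by
  by_contra! hlt
  have hε : ∀ k, 0 < a ^ k * b := fun k => by positivity
  have hP : ∀ k, 0 ≤ P k := fun k => (hε k).le.trans (hlt k).le
  have hquad : ∀ k, P (k + 1) ≤ 2 * C * P k ^ 2 := fun k => by
    linarith [hrec k, hlt (k + 1)]
  obtain ⟨k, hk⟩ := exists_pow_two_pow_le_pow_mul (mul_nonneg (by linarith) (hP 0)) hinit ha hb
  have hdecay := mul_le_pow_two_pow_of_le_mul_sq (by linarith) hP hquad k
  nlinarith [hlt k, hP k]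

theorem recursion_polynomial_probabilities_general (Y : ℝ) (hY : 2 ≤ Y) (p : ℝ)
    (d : ℕ) (L₀ : ℝ) (hL₀ : 1 < L₀)
    (P : ℕ → ℝ)
    (hrec : ∀ k, P (k + 1) ≤ (2 * Y) ^ (2 * d) * (P k) ^ 2 +
      (1 / 2) * (Y ^ (k + 1) * L₀) ^ (-p))
    (hinit : 2 * (2 * Y) ^ (2 * d) * P 0 < 1) :
    ∃ K₀ : ℕ, P K₀ ≤ (Y ^ K₀ * L₀) ^ (-p) := by
  have hY₀ : 0 < Y := by linarith
  have hL₀' : 0 < L₀ := by linarith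
  have hL : ∀ k : ℕ, (Y ^ k * L₀) ^ (-p) = (Y ^ (-p)) ^ k * L₀ ^ (-p) := fun k => by
    rw [Real.mul_rpow (by positivity) hL₀'.le, Real.rpow_pow_comm hY₀.le]
  simp only [hL] at hrec ⊢
  exact exists_le_pow_mul_of_le_mul_sq_add (one_le_mul_of_one_le_of_one_le one_le_two
    (one_le_pow₀ (by linarith))) (by positivity) (by positivity) hrec hinit

/-- Abstract recursion from the proof of Proposition 3.1: if `P_{k+1} ≤ (2Y)^{2d} P_k² +
(1/2) L_{k+1}^{-p}` with `L_k = Y^k L_0` and `2(2Y)^{2d} P_0 < 1`, then `P_{K₀} ≤ L_{K₀}^{-p}`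
for some `K₀`. -/
theorem recursion_polynomial_probabilities (Y : ℝ) (hY : 2 ≤ Y) (p : ℝ) (hp : 0 < p)
    (d : ℕ) (hd : 1 ≤ d) (L₀ : ℝ) (hL₀ : 1 < L₀)
    (P : ℕ → ℝ) (hPmem : ∀ k, P k ∈ Set.Icc (0 : ℝ) 1)
    (hrec : ∀ k, P (k + 1) ≤ (2 * Y) ^ (2 * d) * (P k) ^ 2 +
      (1 / 2) * (Y ^ (k + 1) * L₀) ^ (-p))
    (hinit : 2 * (2 * Y) ^ (2 * d) * P 0 < 1) :
    ∃ K₀ : ℕ, P K₀ ≤ (Y ^ K₀ * L₀) ^ (-p) :=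
  recursion_polynomial_probabilities_general Y hY p d L₀ hL₀ P hrec hinit
end

section
/- Let Y ≥ 2, s, ζ ∈ (0,1) with ζ < s, d ≥ 1, N = ⌊Y^s⌋ ≥ 1, and L_k = Y^k L_0. Suppose (P̃_k) ⊂ [0,1] satisfies P̃_{k+1} ≤ (2Y)^{(N+1)d} P̃_k^{N+1} + (1/2) e^{−L_{k+1}^ζ} for all k, and (2(2Y)^{(N+1)d})^{1/N} P̃_0 < 1. Then there exists K₀ ∈ ℕ with P̃_{K₀} ≤ e^{−L_{K₀}^ζ}. -/
/-- Abstract recursion from the proof of Proposition 3.5: with `N = ⌊Y^s⌋ ≥ 1`,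
`L_k = Y^k L₀`, if `P̃_{k+1} ≤ (2Y)^{(N+1)d} P̃_k^{N+1} + (1/2) e^{-L_{k+1}^ζ}` and
`(2(2Y)^{(N+1)d})^{1/N} P̃_0 < 1`, then `P̃_{K₀} ≤ e^{-L_{K₀}^ζ}` for some `K₀`. -/
theorem recursion_subexponential_probabilities (Y : ℝ) (hY : 2 ≤ Y)
    (s ζ : ℝ) (hs₀ : 0 < s) (hs₁ : s < 1) (hζ₀ : 0 < ζ) (hζ₁ : ζ < 1) (hζs : ζ < s)
    (d : ℕ) (hd : 1 ≤ d) (N : ℕ) (hN : N = ⌊Y ^ s⌋₊) (hN₁ : 1 ≤ N)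
    (L₀ : ℝ) (hL₀ : 0 < L₀)
    (P : ℕ → ℝ) (hPmem : ∀ k, P k ∈ Set.Icc (0 : ℝ) 1)
    (hrec : ∀ k, P (k + 1) ≤ (2 * Y) ^ ((N + 1) * d) * (P k) ^ (N + 1) +
      (1 / 2) * Real.exp (-(Y ^ (k + 1) * L₀) ^ ζ))
    (hinit : (2 * (2 * Y) ^ ((N + 1) * d)) ^ ((1 : ℝ) / N) * P 0 < 1) :
    ∃ K₀ : ℕ, P K₀ ≤ Real.exp (-(Y ^ K₀ * L₀) ^ ζ) := by
  by_contra hcon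
  push_neg at hcon
  have hY0 : (0:ℝ) < Y := by linarith
  have h2Y : (1:ℝ) ≤ 2 * Y := by linarith
  set C : ℝ := 2 * (2 * Y) ^ ((N + 1) * d) with hCdef
  have hC1 : (1:ℝ) ≤ C := by
    have h := one_le_pow₀ (n := (N+1)*d) h2Y
    rw [hCdef]; nlinarith
  have hCpos : (0:ℝ) < C := by linarith
  have hNR : (0:ℝ) < (N:ℝ) := by exact_mod_cast hN₁
  -- simplified recursion
  have hrec' : ∀ k, P (k+1) ≤ C * P k ^ (N+1) := by
    intro k
    have h1 := hrec k
    have h2 := hcon (k+1)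
    have h3 : C * P k ^ (N+1) = 2 * ((2*Y) ^ ((N+1)*d) * P k ^ (N+1)) := by
      rw [hCdef]; ring
    linarith
  set D : ℝ := C ^ ((1:ℝ)/N) with hDdef
  have hDpos : 0 < D := Real.rpow_pos_of_pos hCpos _
  have hD1 : (1:ℝ) ≤ D := Real.one_le_rpow hC1 (by positivity)
  have hP0pos : 0 < P 0 := lt_trans (Real.exp_pos _) (hcon 0)
  have hq1 : D * P 0 < 1 := hinit
  have hq0 : 0 < D * P 0 := mul_pos hDpos hP0pos
  have hDpow : D ^ (N+1) = D * C := by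
    rw [hDdef, ← Real.rpow_natCast (C ^ ((1:ℝ)/N)) (N+1), ← Real.rpow_mul hCpos.le]
    rw [show (1:ℝ)/N * ((N+1 : ℕ):ℝ) = 1/N + 1 by push_cast; field_simp; ring]
    rw [Real.rpow_add hCpos, Real.rpow_one]
  -- iterate
  have hiter : ∀ k, D * P k ≤ (D * P 0) ^ ((N+1)^k) := by
    intro k
    induction k with
    | zero => simp
    | succ k ih =>
      have hPk0 : 0 ≤ P k := (hPmem k).1
      have hDP0 : 0 ≤ D * P k := by positivity
      calc D * P (k+1) ≤ D * (C * P k ^ (N+1)) :=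
            mul_le_mul_of_nonneg_left (hrec' k) hDpos.le
        _ = (D * P k) ^ (N+1) := by rw [mul_pow, hDpow]; ring
        _ ≤ ((D * P 0) ^ ((N+1)^k)) ^ (N+1) := pow_le_pow_left₀ hDP0 ih _
        _ = (D * P 0) ^ ((N+1)^(k+1)) := by rw [← pow_mul, pow_succ]
  -- log inequality
  set q : ℝ := D * P 0 with hqdef
  set a : ℝ := -Real.log q with hadef
  have ha : 0 < a := by
    have := Real.log_neg hq0 hq1
    rw [hadef]; linarith
  have hkey : ∀ k : ℕ, ((N:ℝ)+1) ^ k * a < Y ^ ((k:ℝ) * ζ) * L₀ ^ ζ := by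
    intro k
    have h1 : Real.exp (-(Y ^ k * L₀) ^ ζ) < q ^ ((N+1)^k) := by
      have h2 : P k ≤ D * P k := by
        have hPk0 : 0 ≤ P k := (hPmem k).1
        nlinarith
      exact lt_of_lt_of_le (hcon k) (le_trans h2 (hiter k))
    have h3 := Real.log_lt_log (Real.exp_pos _) h1
    rw [Real.log_exp, Real.log_pow] at h3
    have h4 : (((N+1)^k : ℕ):ℝ) * Real.log q = -(((N:ℝ)+1)^k * a) := by
      rw [hadef]; push_cast; ring
    rw [h4] at h3
    have h5 : (Y ^ k * L₀) ^ ζ = Y ^ ((k:ℝ) * ζ) * L₀ ^ ζ := by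
      rw [Real.mul_rpow (by positivity) hL₀.le, ← Real.rpow_natCast Y k,
        ← Real.rpow_mul hY0.le]
    rw [h5] at h3
    linarith
  -- Y^s ≤ N+1
  have hYs : Y ^ s ≤ (N:ℝ) + 1 := by
    have := Nat.lt_floor_add_one (Y ^ s)
    rw [← hN] at this
    exact_mod_cast this.le
  have hYs0 : (0:ℝ) ≤ Y ^ s := Real.rpow_nonneg hY0.le s
  -- choose k large
  have hE : (1:ℝ) < Y ^ (s - ζ) :=
    Real.one_lt_rpow_iff_of_pos hY0 |>.mpr (Or.inl ⟨by linarith, by linarith⟩)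
  obtain ⟨k, hk⟩ := pow_unbounded_of_one_lt (L₀ ^ ζ / a) hE
  -- derive contradiction at k
  have h6 : Y ^ ((k:ℝ) * s) * a < Y ^ ((k:ℝ) * ζ) * L₀ ^ ζ := by
    have h7 : Y ^ ((k:ℝ) * s) ≤ ((N:ℝ)+1) ^ k := by
      rw [mul_comm, Real.rpow_mul hY0.le, Real.rpow_natCast]
      exact pow_le_pow_left₀ hYs0 hYs k
    exact lt_of_le_of_lt (mul_le_mul_of_nonneg_right h7 ha.le) (hkey k)
  have h8 : Y ^ ((k:ℝ) * s) = Y ^ ((k:ℝ) * ζ) * Y ^ ((k:ℝ) * (s - ζ)) := by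
    rw [← Real.rpow_add hY0]; ring_nf
  have h9 : (0:ℝ) < Y ^ ((k:ℝ) * ζ) := Real.rpow_pos_of_pos hY0 _
  have h10 : Y ^ ((k:ℝ) * (s - ζ)) * a < L₀ ^ ζ := by
    rw [h8, mul_assoc] at h6
    exact (mul_lt_mul_iff_right₀ h9).mp h6
  have h11 : (Y ^ (s - ζ)) ^ k = Y ^ ((k:ℝ) * (s - ζ)) := by
    rw [mul_comm, Real.rpow_mul hY0.le, Real.rpow_natCast]
  rw [h11, div_lt_iff₀ ha] at hk
  linarith
end
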